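/- arXiv:1102.5438 — 4 statements merged into one kernel-verified Lean document; each statement's English description precedes it below -/
import Mathlib

section
/- For every n there exists a nonrepetitive sequence of length n over a 3-element alphabet (Thue's theorem). -/
/-! The Thue–Morse word `t` is overlap-free: it has no factor `a u a u a`. An overlap of even
period shrinks to one of half the period under `t (2n) = t n`, `t (2n+1) = !t n`; an overlap of odd
period is impossible, since equal adjacent bits occur only at odd positions and an alternating
stretch has no odd period. The difference sequence `t (n+1) - t n`, over the letters `-1, 0, 1`, is
then square-free: a square `x x` of differences starting at `i` forces
`t (i+h) - t i = t (i+2h) - t (i+h)`, hence `t i = t (i+h)` for bits, and so lifts to an overlap. -/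

/-- A 1-indexed sequence `s` has a repetition within its first `n` terms. -/
def HasRepetition {α : Type*} (s : ℕ → α) (n : ℕ) : Prop :=
  ∃ i h, 1 ≤ i ∧ 1 ≤ h ∧ i + 2 * h - 1 ≤ n ∧ ∀ j < h, s (i + j) = s (i + h + j)

section Patterns

variable {α : Type*}

def HasSquareAt (f : ℕ → α) (i h : ℕ) : Prop :=
  ∀ j < h, f (i + j) = f (i + h + j)

def HasOverlapAt (f : ℕ → α) (i h : ℕ) : Prop :=
  ∀ j ≤ h, f (i + j) = f (i + h + j)

end Patterns

lemma eq_iff_even_of_alternating {f : ℕ → Bool} {i : ℕ} :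
    ∀ {h : ℕ}, (∀ j < h, f (i + j + 1) ≠ f (i + j)) → (f (i + h) = f i ↔ Even h)
  | 0, _ => by simp
  | h + 1, hf => by
    rw [← add_assoc, Bool.eq_not.mpr (hf h h.lt_succ_self), Nat.even_add_one,
      ← eq_iff_even_of_alternating fun j hj => hf j (by omega)]
    cases f (i + h) <;> cases f i <;> decide

def thueMorse (n : ℕ) : Bool := decide (Odd (Nat.digits 2 n).sum)

@[simp] lemma thueMorse_two_mul (n : ℕ) : thueMorse (2 * n) = thueMorse n := by
  rcases n.eq_zero_or_pos with rfl | hn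
  · rfl
  · simp [thueMorse, Nat.digits_def' one_lt_two (by omega : 0 < 2 * n)]

@[simp] lemma thueMorse_two_mul_add_one (n : ℕ) : thueMorse (2 * n + 1) = !thueMorse n := by
  rw [thueMorse, Nat.digits_def' one_lt_two (by omega), show (2 * n + 1) / 2 = n by omega]
  simp [add_comm 1, Nat.odd_add_one, thueMorse, -Nat.not_odd_iff_even]

lemma thueMorse_two_mul_add_eq_iff {a b r : ℕ} (hr : r < 2) :
    thueMorse (2 * a + r) = thueMorse (2 * b + r) ↔ thueMorse a = thueMorse b := by
  interval_cases r <;> simp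

lemma odd_of_thueMorse_eq_succ {m : ℕ} (hm : thueMorse m = thueMorse (m + 1)) : Odd m := by
  rcases m.even_or_odd' with ⟨k, rfl | rfl⟩
  · simp at hm
  · exact odd_two_mul_add_one k

lemma HasOverlapAt.thueMorse_half {i m : ℕ} (hov : HasOverlapAt thueMorse i (2 * m)) :
    HasOverlapAt thueMorse (i / 2) m := by
  intro j hj
  have := hov (2 * j) (by omega)
  rwa [show i + 2 * j = 2 * (i / 2 + j) + i % 2 by omega,
    show i + 2 * m + 2 * j = 2 * (i / 2 + m + j) + i % 2 by omega,
    thueMorse_two_mul_add_eq_iff (i.mod_lt two_pos)] at this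

lemma not_hasOverlapAt_thueMorse_of_odd {i h : ℕ} (hh : Odd h) :
    ¬ HasOverlapAt thueMorse i h := by
  intro hov
  by_cases hpair : ∃ j < h, thueMorse (i + j) = thueMorse (i + j + 1)
  · obtain ⟨j, hj, heq⟩ := hpair
    have hcopy : thueMorse (i + h + j) = thueMorse (i + h + j + 1) := by
      rw [← hov j hj.le, heq, add_assoc, hov (j + 1) hj, ← add_assoc]
    obtain ⟨a, ha⟩ := odd_of_thueMorse_eq_succ heq
    obtain ⟨b, hb⟩ := odd_of_thueMorse_eq_succ hcopy
    obtain ⟨c, hc⟩ := hh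
    omega
  · push Not at hpair
    have := eq_iff_even_of_alternating (f := thueMorse) fun j hj => (hpair j hj).symm
    exact Nat.not_even_iff_odd.mpr hh (this.mp (by simpa using (hov 0 h.zero_le).symm))

theorem not_hasOverlapAt_thueMorse {i h : ℕ} (hh : 0 < h) : ¬ HasOverlapAt thueMorse i h := by
  induction h using Nat.strong_induction_on generalizing i with
  | _ h ih =>
    rcases h.even_or_odd' with ⟨m, rfl | rfl⟩
    · exact fun hov => ih m (by omega) (by omega) hov.thueMorse_half
    · exact not_hasOverlapAt_thueMorse_of_odd (odd_two_mul_add_one m)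

/-- The difference sequence of a binary sequence, in `ZMod 3` so that the steps `-1, 0, 1` are
three distinct letters. -/
def diffSeq (f : ℕ → Bool) (n : ℕ) : ZMod 3 := (f (n + 1)).toNat - (f n).toNat

lemma Bool.toNat_cast_zmod_three_injective :
    Function.Injective (fun b : Bool => (b.toNat : ZMod 3)) := by
  decide

lemma Bool.eq_of_toNat_sub_eq_sub_zmod_three {a b c : Bool}
    (h : (b.toNat : ZMod 3) - a.toNat = c.toNat - b.toNat) : a = b := by
  revert a b c; decide

lemma sum_diffSeq (f : ℕ → Bool) (i h : ℕ) :
    ∑ j ∈ Finset.range h, diffSeq f (i + j) = (f (i + h)).toNat - (f i).toNat := by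
  simpa [diffSeq, add_assoc] using Finset.sum_range_sub (fun j => ((f (i + j)).toNat : ZMod 3)) h

lemma HasSquareAt.hasOverlapAt_of_diffSeq {f : ℕ → Bool} {i h : ℕ}
    (hsq : HasSquareAt (diffSeq f) i h) : HasOverlapAt f i h := by
  have hstart : f i = f (i + h) := by
    apply Bool.eq_of_toNat_sub_eq_sub_zmod_three (c := f (i + h + h))
    rw [← sum_diffSeq, ← sum_diffSeq]
    exact Finset.sum_congr rfl fun j hj => hsq j (Finset.mem_range.mp hj)
  intro j hj
  induction j with
  | zero => simpa using hstart
  | succ j ih =>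
    have hstep := hsq j hj
    simp only [diffSeq, ih (by omega), sub_left_inj] at hstep
    simpa [add_assoc] using Bool.toNat_cast_zmod_three_injective hstep

/-- Thue's theorem: for every `n` there exists a nonrepetitive sequence of
length `n` over a 3-element alphabet. -/
theorem thue_nonrepetitive_ternary (n : ℕ) :
    ∃ s : ℕ → Fin 3, ¬ HasRepetition s n := by
  -- `ZMod 3` is `Fin 3` by definition
  refine ⟨diffSeq thueMorse, ?_⟩
  rintro ⟨i, h, -, hh, -, hsq⟩
  exact not_hasOverlapAt_thueMorse hh (HasSquareAt.hasOverlapAt_of_diffSeq hsq)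
end

section
/- For every k ≥ 1, at least k + 2 symbols are needed to create arbitrarily long sequences that are nonrepetitive up to mod k; that is, M(k) ≥ k + 2. Concretely: for every k ≥ 1 there exists N such that no sequence of length N over an alphabet of size k + 1 is nonrepetitive up to mod k. -/
/-!
Equal symbols at distance `d ≤ k` form a square of length one in the subsequence of difference
`d`, so any `k + 1` consecutive symbols are distinct. Over `k + 1` symbols, pigeonhole then
forces the sequence to be periodic with period `k + 1`, and two consecutive periods form a
square of difference `1`.
-/

/-- A 1-indexed sequence `s` of length `n` is nonrepetitive up to mod `k`:
for every common difference `d ∈ {1, ..., k}`, no arithmetic subsequence with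
difference `d` contains two identical adjacent blocks. -/
def NonrepetitiveUpToMod {α : Type*} (k : ℕ) (s : ℕ → α) (n : ℕ) : Prop :=
  ∀ d i h, 1 ≤ d → d ≤ k → 1 ≤ i → 1 ≤ h → i + (2 * h - 1) * d ≤ n →
    ¬ ∀ t < h, s (i + t * d) = s (i + (h + t) * d)

namespace NonrepetitiveUpToMod

variable {α : Type*} {k n : ℕ} {s : ℕ → α}

theorem apply_ne_apply_add (hs : NonrepetitiveUpToMod k s n) {i d : ℕ} (hi : 1 ≤ i)
    (hd : 1 ≤ d) (hdk : d ≤ k) (hn : i + d ≤ n) : s i ≠ s (i + d) := by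
  intro heq
  refine hs d i 1 hd hdk hi le_rfl (by omega) fun t ht => ?_
  obtain rfl : t = 0 := by omega
  simpa using heq

theorem apply_eq_apply_add_of_card_le [Fintype α] (hα : Fintype.card α ≤ k + 1)
    (hs : NonrepetitiveUpToMod k s n) {i : ℕ} (hi : 1 ≤ i) (hn : i + (k + 1) ≤ n) :
    s i = s (i + (k + 1)) := by
  obtain ⟨x, hx, y, hy, hxy, hsxy⟩ :=
    Finset.exists_ne_map_eq_of_card_lt_of_maps_to (t := (Finset.univ : Finset α))
      (s := Finset.Icc i (i + (k + 1))) (by rw [Finset.card_univ, Nat.card_Icc]; omega)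
      fun _ _ => Finset.mem_univ _
  rw [Finset.mem_Icc] at hx hy
  wlog hlt : x < y generalizing x y
  · exact this y hy x hx hxy.symm hsxy.symm (by omega)
  by_cases hclose : y - x ≤ k
  · refine absurd ?_ (hs.apply_ne_apply_add (i := x) (d := y - x) (by omega) (by omega) hclose
      (by omega))
    rwa [Nat.add_sub_cancel' hlt.le]
  · obtain rfl : x = i := by omega
    obtain rfl : y = x + (k + 1) := by omega
    exact hsxy

theorem not_forall_apply_eq_apply_add (hs : NonrepetitiveUpToMod k s n) (hk : 1 ≤ k)
    {p : ℕ} (hp : 1 ≤ p) (hn : 2 * p ≤ n) : ¬ ∀ j, 1 ≤ j → j ≤ p → s j = s (j + p) := by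
  intro hper
  refine hs 1 1 p le_rfl hk le_rfl hp (by omega) fun t ht => ?_
  simpa [add_comm, add_left_comm, add_assoc] using hper (1 + t) (by omega) (by omega)

end NonrepetitiveUpToMod

/-- `M(k) ≥ k + 2`: for every `k ≥ 1` there is `N` such that no sequence of
length `N` over an alphabet of `k + 1` symbols is nonrepetitive up to mod `k`. -/
theorem M_ge_k_add_two (k : ℕ) (hk : 1 ≤ k) :
    ∃ N : ℕ, ∀ s : ℕ → Fin (k + 1), ¬ NonrepetitiveUpToMod k s N :=
  ⟨2 * (k + 1), fun _ hs => hs.not_forall_apply_eq_apply_add hk (Nat.le_add_left 1 k) le_rfl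
    fun _ hj hjk => hs.apply_eq_apply_add_of_card_le (by simp) hj (by omega)⟩
end

section
/- For every positive integers n and k, and every sequence of finite sets (lists) L_1, ..., L_n each of size at least 2k + 10⌈√k⌉, there exists a sequence S = s_1 ... s_n with s_i ∈ L_i for all i, such that S is nonrepetitive up to mod k. -/
/-!
For a set `I` of positions let `C(I)` be the number of colourings of `I` from the lists with no
square `x x` along an arithmetic progression of step at most `k`, and let `β = 3⌈√k⌉`. We show
`β C(I) ≤ C(I ∪ {q})` by strong induction on `I`. An extension of a good colouring `σ` of `I` by
a colour at `q` fails only through a square containing `q`; the colour at `q` is then the colour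
of its partner position, and `σ` already repeats on the `h - 1` other pairs of the square.
Deleting one position of each of these pairs and applying the induction hypothesis `h - 1` times
shows that at most `C(I) / β^(h-1)` colourings of `I` do so. Summing over the step, the
half-length and the place of `q` in the square, at most
`k ∑ 2h / β^(h-1) · C(I) ≤ (2k + 7⌈√k⌉) C(I)` of the `(2k + 10⌈√k⌉) C(I)` extensions are bad.
Hence `C([1, n]) ≥ β^n > 0`.
-/

open Finset Function

namespace SquareFreeColoring

variable {α : Type*}

def IsSquareAt (σ : ℕ → α) (i d h : ℕ) : Prop :=
  ∀ t < h, σ (i + t * d) = σ (i + (h + t) * d)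

def SquareFreeOn (k : ℕ) (I : Finset ℕ) (σ : ℕ → α) : Prop :=
  ∀ i d h, 1 ≤ d → d ≤ k → 1 ≤ h → (∀ j < 2 * h, i + j * d ∈ I) → ¬ IsSquareAt σ i d h

theorem nonrepetitiveUpToMod_of_squareFreeOn {k n : ℕ} {σ : ℕ → α}
    (hσ : SquareFreeOn k (Icc 1 n) σ) : NonrepetitiveUpToMod k σ n :=
  fun d i h hd hdk hi hh hlast => hσ i d h hd hdk hh fun j hj => by
    have := Nat.mul_le_mul_right d (show j ≤ 2 * h - 1 by omega)
    exact mem_Icc.2 ⟨by omega, by omega⟩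

theorem add_mul_injective (i : ℕ) {d : ℕ} (hd : 0 < d) : Injective fun j => i + j * d :=
  fun _ _ h => Nat.eq_of_mul_eq_mul_right hd (Nat.add_left_cancel h)

theorem le_card_of_forall_add_mul_mem {s : Finset ℕ} {i d m : ℕ} (hd : 0 < d)
    (hs : ∀ j < m, i + j * d ∈ s) : m ≤ #s :=
  calc m = #((range m).image fun j => i + j * d) := by
        rw [card_image_of_injective _ (add_mul_injective i hd), card_range]
    _ ≤ #s := card_le_card fun x hx => by
        obtain ⟨j, hj, rfl⟩ := mem_image.1 hx
        exact hs j (mem_range.1 hj)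

theorem eq_of_update_eq_update {ι : Type*} [DecidableEq ι] {f g : ι → α} {p x : ι} {c : α}
    (hx : x ≠ p) (hf : f p = f x) (hg : g p = g x) (h : update f p c = update g p c) :
    f = g := by
  funext y
  rcases eq_or_ne y p with rfl | hy
  · simpa [hf, hg, update_of_ne hx] using congrFun h x
  · simpa [update_of_ne hy] using congrFun h y

def IsNearSquare (I : Finset ℕ) (q : ℕ) (σ : ℕ → α) (i d h : ℕ) : Prop :=
  (∀ j < 2 * h, i + j * d ∈ insert q I) ∧
    ∀ t < h, i + t * d ≠ q → i + (h + t) * d ≠ q → σ (i + t * d) = σ (i + (h + t) * d)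

def partner (i d h q : ℕ) : ℕ := if q < i + h * d then q + h * d else q - h * d

theorem exists_isNearSquare_of_not_squareFreeOn_update {k : ℕ} {I : Finset ℕ} {σ : ℕ → α}
    {q : ℕ} {a : α} (hσ : SquareFreeOn k I σ)
    (hbad : ¬SquareFreeOn k (insert q I) (update σ q a)) :
    ∃ i d h r, 1 ≤ d ∧ d ≤ k ∧ 1 ≤ h ∧ r < 2 * h ∧ i + r * d = q ∧
      IsNearSquare I q σ i d h ∧ a = σ (partner i d h q) := by
  simp only [SquareFreeOn, not_forall, not_not] at hbad
  obtain ⟨i, d, h, hd, hdk, hh, hpos, hsq⟩ := hbad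
  have hinj := add_mul_injective i hd
  obtain ⟨r, hr, rfl⟩ : ∃ r < 2 * h, i + r * d = q := by
    by_contra! hne
    refine hσ i d h hd hdk hh (fun j hj => (mem_insert.1 (hpos j hj)).resolve_left (hne j hj))
      fun t ht => ?_
    have := hsq t ht
    rwa [update_of_ne (hne t (by omega)), update_of_ne (hne (h + t) (by omega))] at this
  refine ⟨i, d, h, r, hd, hdk, hh, hr, rfl, ⟨hpos, fun t ht h₁ h₂ => ?_⟩, ?_⟩
  · have := hsq t ht
    rwa [update_of_ne h₁, update_of_ne h₂] at this
  unfold partner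
  split_ifs with hrh
  · have hrh : r < h := Nat.lt_of_mul_lt_mul_right (Nat.lt_of_add_lt_add_left hrh)
    have := hsq r hrh
    rw [update_self, update_of_ne fun e => by have := hinj e; omega] at this
    rw [this]
    ring_nf
  · have hrh : h ≤ r := Nat.le_of_mul_le_mul_right (by omega) hd
    have := hsq (r - h) (by omega)
    rw [show h + (r - h) = r by omega, update_self,
      update_of_ne fun e => by have := hinj e; omega] at this
    rw [← this, Nat.sub_mul]
    have := Nat.mul_le_mul_right d hrh
    congr 1
    omega

theorem sub_one_le_card_filter_ne (i : ℕ) {d : ℕ} (hd : 0 < d) (h q : ℕ) :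
    h - 1 ≤ #((range h).filter fun t => i + t * d ≠ q ∧ i + (h + t) * d ≠ q) := by
  -- `q` is hit by at most one position of the progression, hence lies in at most one pair.
  have hle : #((range h).filter fun t => ¬(i + t * d ≠ q ∧ i + (h + t) * d ≠ q)) ≤ 1 := by
    refine card_le_one.2 fun t₁ ht₁ t₂ ht₂ => ?_
    simp only [mem_filter, mem_range, not_and_or, not_not] at ht₁ ht₂
    have hinj := add_mul_injective i hd
    obtain ⟨h₁, e₁ | e₁⟩ := ht₁ <;> obtain ⟨h₂, e₂ | e₂⟩ := ht₂ <;>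
      · have := hinj (e₁.trans e₂.symm)
        omega
  have := card_filter_add_card_filter_not (s := range h)
    fun t => i + t * d ≠ q ∧ i + (h + t) * d ≠ q
  rw [card_range] at this
  omega

def squareIndices (k N : ℕ) : Finset ((_ : ℕ × ℕ) × ℕ) :=
  (Icc 1 k ×ˢ Icc 1 N).sigma fun x => range (2 * x.2)

theorem sum_squareIndices {R : Type*} [CommSemiring R] (k N : ℕ) (g : ℕ → R) :
    ∑ y ∈ squareIndices k N, g y.1.2 = k * ∑ h ∈ Icc 1 N, 2 * h * g h := by
  simp [squareIndices, sum_sigma, sum_product, mul_assoc]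

section Colorings

open scoped Classical

variable (k : ℕ) (L : ℕ → Finset α) (c : α)

/-- A colouring of `I` is encoded as a function `ℕ → α` that equals `c` off `I`. -/
noncomputable def colorings (I : Finset ℕ) : Finset (ℕ → α) :=
  (I.pi L).image fun f i => if hi : i ∈ I then f i hi else c

noncomputable def goodColorings (I : Finset ℕ) : Finset (ℕ → α) :=
  (colorings L c I).filter (SquareFreeOn k I)

variable {k L c} {I : Finset ℕ} {σ : ℕ → α}

theorem mem_colorings : σ ∈ colorings L c I ↔ (∀ i ∈ I, σ i ∈ L i) ∧ ∀ i ∉ I, σ i = c := by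
  constructor
  · intro hσ
    obtain ⟨f, hf, rfl⟩ := mem_image.1 hσ
    rw [mem_pi] at hf
    exact ⟨fun i hi => by simpa [hi] using hf i hi, fun i hi => by simp [hi]⟩
  · rintro ⟨hL, hc⟩
    refine mem_image.2 ⟨fun i _ => σ i, mem_pi.2 hL, funext fun i => ?_⟩
    by_cases hi : i ∈ I <;> simp [hi, hc]

theorem mem_goodColorings :
    σ ∈ goodColorings k L c I ↔ σ ∈ colorings L c I ∧ SquareFreeOn k I σ :=
  mem_filter

theorem goodColorings_empty : goodColorings k L c ∅ = {fun _ => c} := by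
  ext σ
  rw [mem_goodColorings, mem_colorings, mem_singleton]
  constructor
  · rintro ⟨⟨-, hc⟩, -⟩
    exact funext fun i => hc i (notMem_empty i)
  · rintro rfl
    exact ⟨⟨by simp, fun _ _ => rfl⟩,
      fun i d h _ _ hh hpos => (notMem_empty _ (hpos 0 (by omega))).elim⟩

theorem update_mem_goodColorings_erase (hσ : σ ∈ goodColorings k L c I) (p : ℕ) :
    update σ p c ∈ goodColorings k L c (I.erase p) := by
  obtain ⟨hσ, hfree⟩ := mem_goodColorings.1 hσ
  obtain ⟨hL, hc⟩ := mem_colorings.1 hσ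
  refine mem_goodColorings.2 ⟨mem_colorings.2 ⟨fun i hi => ?_, fun i hi => ?_⟩,
    fun i d h hd hdk hh hpos hsq => ?_⟩
  · rw [update_of_ne (ne_of_mem_erase hi)]
    exact hL i (mem_of_mem_erase hi)
  · rcases eq_or_ne i p with rfl | hip
    · exact update_self ..
    · rw [update_of_ne hip]
      exact hc i fun hiI => hi (mem_erase.2 ⟨hip, hiI⟩)
  · refine hfree i d h hd hdk hh (fun j hj => mem_of_mem_erase (hpos j hj)) fun t ht => ?_
    have := hsq t ht
    rwa [update_of_ne (ne_of_mem_erase (hpos t (by omega))),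
      update_of_ne (ne_of_mem_erase (hpos (h + t) (by omega)))] at this

theorem update_mem_goodColorings_insert {q : ℕ} {a : α} (hσ : σ ∈ colorings L c I)
    (ha : a ∈ L q) (hfree : SquareFreeOn k (insert q I) (update σ q a)) :
    update σ q a ∈ goodColorings k L c (insert q I) := by
  obtain ⟨hL, hc⟩ := mem_colorings.1 hσ
  refine mem_goodColorings.2 ⟨mem_colorings.2 ⟨fun i hi => ?_, fun i hi => ?_⟩, hfree⟩
  · rcases eq_or_ne i q with rfl | hiq
    · rwa [update_self]
    · rw [update_of_ne hiq]
      exact hL i ((mem_insert.1 hi).resolve_left hiq)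
  · rw [mem_insert, not_or] at hi
    rw [update_of_ne hi.1]
    exact hc i hi.2

theorem pow_card_mul_card_filter_le {β : ℕ} {U : Finset ℕ}
    (hgrow : ∀ J ⊆ U, ∀ p ∈ J,
      β * #(goodColorings k L c (J.erase p)) ≤ #(goodColorings k L c J))
    {i d h : ℕ} (hd : 0 < d) (T : Finset ℕ) (hTh : ∀ t ∈ T, t < h) (hIU : I ⊆ U)
    (hTI : ∀ t ∈ T, i + t * d ∈ I ∧ i + (h + t) * d ∈ I) :
    β ^ #T * #((goodColorings k L c I).filter
        fun σ => ∀ t ∈ T, σ (i + t * d) = σ (i + (h + t) * d)) ≤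
      #(goodColorings k L c I) := by
  induction T using Finset.induction_on generalizing I with
  | empty => simp
  | insert t T htT ih =>
    have hinj := add_mul_injective i hd
    have ht := hTh t (mem_insert_self t T)
    set p := i + (h + t) * d
    have htp : i + t * d ≠ p := fun e => by have := hinj e; omega
    have hTp : ∀ t' ∈ T, i + t' * d ≠ p ∧ i + (h + t') * d ≠ p := fun t' ht' =>
      ⟨fun e => by have := hinj e; have := hTh t' (mem_insert_of_mem ht'); omega,
        fun e => htT (by rwa [show t = t' by have := hinj e; omega])⟩
    -- Deleting the colour at `p` loses nothing: it is the colour at `i + t d`.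
    have hcard : #((goodColorings k L c I).filter
          fun σ => ∀ t' ∈ insert t T, σ (i + t' * d) = σ (i + (h + t') * d)) ≤
        #((goodColorings k L c (I.erase p)).filter
          fun σ => ∀ t' ∈ T, σ (i + t' * d) = σ (i + (h + t') * d)) := by
      refine card_le_card_of_injOn (update · p c) (fun σ hσ => ?_) fun σ₁ hσ₁ σ₂ hσ₂ he => ?_
      · obtain ⟨hσ, hσT⟩ := mem_filter.1 hσ
        refine mem_filter.2 ⟨update_mem_goodColorings_erase hσ p, fun t' ht' => ?_⟩
        dsimp only
        rw [update_of_ne (hTp t' ht').1, update_of_ne (hTp t' ht').2]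
        exact hσT t' (mem_insert_of_mem ht')
      · exact eq_of_update_eq_update htp ((mem_filter.1 hσ₁).2 t (mem_insert_self t T)).symm
          ((mem_filter.1 hσ₂).2 t (mem_insert_self t T)).symm he
    have hrest := ih (fun t' ht' => hTh t' (mem_insert_of_mem ht'))
      ((erase_subset p I).trans hIU) fun t' ht' =>
        ⟨mem_erase.2 ⟨(hTp t' ht').1, (hTI t' (mem_insert_of_mem ht')).1⟩,
          mem_erase.2 ⟨(hTp t' ht').2, (hTI t' (mem_insert_of_mem ht')).2⟩⟩
    calc β ^ #(insert t T) * _ ≤ β * (β ^ #T * _) := by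
          rw [card_insert_of_notMem htT, pow_succ', mul_assoc]
          exact Nat.mul_le_mul_left _ (Nat.mul_le_mul_left _ hcard)
      _ ≤ β * #(goodColorings k L c (I.erase p)) := Nat.mul_le_mul_left _ hrest
      _ ≤ #(goodColorings k L c I) := hgrow I hIU p (hTI t (mem_insert_self t T)).2

theorem pow_mul_card_filter_isNearSquare_le {β : ℕ} (hβ : 0 < β)
    (hgrow : ∀ J ⊆ I, ∀ p ∈ J,
      β * #(goodColorings k L c (J.erase p)) ≤ #(goodColorings k L c J))
    (q : ℕ) {i d h : ℕ} (hd : 0 < d) :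
    β ^ (h - 1) * #((goodColorings k L c I).filter fun σ => IsNearSquare I q σ i d h) ≤
      #(goodColorings k L c I) := by
  by_cases hpos : ∀ j < 2 * h, i + j * d ∈ insert q I
  swap
  · rw [filter_false_of_mem fun σ _ hσ => hpos hσ.1, card_empty, mul_zero]
    exact Nat.zero_le _
  set T := (range h).filter fun t => i + t * d ≠ q ∧ i + (h + t) * d ≠ q
  have hTh : ∀ t ∈ T, t < h := fun t ht => mem_range.1 (mem_filter.1 ht).1
  have hTI : ∀ t ∈ T, i + t * d ∈ I ∧ i + (h + t) * d ∈ I := fun t ht => by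
    obtain ⟨ht, hne₁, hne₂⟩ := mem_filter.1 ht
    have ht := mem_range.1 ht
    exact ⟨(mem_insert.1 (hpos t (by omega))).resolve_left hne₁,
      (mem_insert.1 (hpos (h + t) (by omega))).resolve_left hne₂⟩
  calc β ^ (h - 1) * _ ≤ β ^ #T * #((goodColorings k L c I).filter
          fun σ => ∀ t ∈ T, σ (i + t * d) = σ (i + (h + t) * d)) := by
        refine Nat.mul_le_mul (Nat.pow_le_pow_right hβ (sub_one_le_card_filter_ne i hd h q))
          (card_le_card (monotone_filter_right _ fun σ _ hσ t ht => ?_))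
        obtain ⟨ht, hne⟩ := mem_filter.1 ht
        exact hσ.2 t (mem_range.1 ht) hne.1 hne.2
    _ ≤ _ := pow_card_mul_card_filter_le hgrow hd T hTh subset_rfl hTI

theorem card_filter_not_squareFreeOn_update_le {q N : ℕ} (hσ : SquareFreeOn k I σ)
    (hN : #(insert q I) ≤ N) :
    #((L q).filter fun a => ¬SquareFreeOn k (insert q I) (update σ q a)) ≤
      #((squareIndices k N).filter
        fun y => IsNearSquare I q σ (q - y.2 * y.1.1) y.1.1 y.1.2) := by
  refine (card_le_card fun a ha => ?_).trans
    (card_image_le (f := fun y => σ (partner (q - y.2 * y.1.1) y.1.1 y.1.2 q)))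
  obtain ⟨i, d, h, r, hd, hdk, hh, hr, rfl, hnear, rfl⟩ :=
    exists_isNearSquare_of_not_squareFreeOn_update hσ (mem_filter.1 ha).2
  have hi : i + r * d - r * d = i := by omega
  have hhN : 2 * h ≤ N := (le_card_of_forall_add_mul_mem hd hnear.1).trans hN
  refine mem_image.2 ⟨⟨(d, h), r⟩, mem_filter.2 ⟨?_, by simpa [hi] using hnear⟩, by simp [hi]⟩
  simp only [squareIndices, mem_sigma, mem_product, mem_Icc, mem_range]
  omega

theorem sum_card_filter_not_squareFreeOn_update_le {β : ℕ} (hβ : 0 < β)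
    (hgrow : ∀ J ⊆ I, ∀ p ∈ J,
      β * #(goodColorings k L c (J.erase p)) ≤ #(goodColorings k L c J))
    {q N : ℕ} (hN : #(insert q I) ≤ N) :
    (∑ σ ∈ goodColorings k L c I,
        #((L q).filter fun a => ¬SquareFreeOn k (insert q I) (update σ q a)) : ℝ) ≤
      k * (∑ h ∈ Icc 1 N, 2 * h / (β : ℝ) ^ (h - 1)) * #(goodColorings k L c I) := by
  set C := #(goodColorings k L c I)
  have hcount : ∑ σ ∈ goodColorings k L c I,
        #((L q).filter fun a => ¬SquareFreeOn k (insert q I) (update σ q a)) ≤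
      ∑ y ∈ squareIndices k N, #((goodColorings k L c I).filter
        fun σ => IsNearSquare I q σ (q - y.2 * y.1.1) y.1.1 y.1.2) :=
    calc _ ≤ ∑ σ ∈ goodColorings k L c I, #((squareIndices k N).filter
          fun y => IsNearSquare I q σ (q - y.2 * y.1.1) y.1.1 y.1.2) :=
          sum_le_sum fun σ hσ =>
            card_filter_not_squareFreeOn_update_le (mem_goodColorings.1 hσ).2 hN
      _ = _ := by simp only [card_filter]; exact sum_comm
  have hpattern : ∀ y ∈ squareIndices k N, (#((goodColorings k L c I).filter
      fun σ => IsNearSquare I q σ (q - y.2 * y.1.1) y.1.1 y.1.2) : ℝ) ≤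
        C / (β : ℝ) ^ (y.1.2 - 1) := fun y hy => by
    have hd : 0 < y.1.1 := by
      simp only [squareIndices, mem_sigma, mem_product, mem_Icc] at hy
      omega
    rw [le_div_iff₀ (by positivity), mul_comm]
    exact_mod_cast pow_mul_card_filter_isNearSquare_le hβ hgrow q hd
  calc _ ≤ ∑ y ∈ squareIndices k N, (#((goodColorings k L c I).filter
          fun σ => IsNearSquare I q σ (q - y.2 * y.1.1) y.1.1 y.1.2) : ℝ) := by
        exact_mod_cast hcount
    _ ≤ ∑ y ∈ squareIndices k N, C / (β : ℝ) ^ (y.1.2 - 1) := sum_le_sum hpattern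
    _ = k * ∑ h ∈ Icc 1 N, 2 * h * (C / (β : ℝ) ^ (h - 1)) :=
        sum_squareIndices k N fun h => C / (β : ℝ) ^ (h - 1)
    _ = _ := by
      rw [mul_assoc, sum_mul]
      exact congrArg _ (sum_congr rfl fun h _ => by ring)

theorem sum_card_filter_squareFreeOn_update_le {q : ℕ} (hqI : q ∉ I) :
    ∑ σ ∈ goodColorings k L c I,
        #((L q).filter fun a => SquareFreeOn k (insert q I) (update σ q a)) ≤
      #(goodColorings k L c (insert q I)) := by
  rw [← card_sigma]
  refine card_le_card_of_injOn (fun x => update x.1 q x.2) (fun x hx => ?_)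
    fun x hx y hy he => ?_
  · obtain ⟨hσ, ha⟩ := mem_sigma.1 hx
    obtain ⟨ha, hfree⟩ := mem_filter.1 ha
    exact update_mem_goodColorings_insert (mem_goodColorings.1 hσ).1 ha hfree
  · have hxq := (mem_colorings.1 (mem_goodColorings.1 (mem_sigma.1 hx).1).1).2 q hqI
    have hyq := (mem_colorings.1 (mem_goodColorings.1 (mem_sigma.1 hy).1).1).2 q hqI
    have h₁ : x.1 = y.1 := funext fun i => by
      rcases eq_or_ne i q with rfl | hi
      · rw [hxq, hyq]
      · simpa [update_of_ne hi] using congrFun he i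
    have h₂ : x.2 = y.2 := by simpa using congrFun he q
    exact Sigma.ext h₁ (heq_of_eq h₂)

theorem mul_card_le_card_insert_of_forall_erase {β q N : ℕ}
    (hL : (β : ℝ) + k * ∑ h ∈ Icc 1 N, 2 * h / (β : ℝ) ^ (h - 1) ≤ #(L q))
    (hgrow : ∀ J ⊆ I, ∀ p ∈ J,
      β * #(goodColorings k L c (J.erase p)) ≤ #(goodColorings k L c J))
    (hqI : q ∉ I) (hN : #(insert q I) ≤ N) :
    β * #(goodColorings k L c I) ≤ #(goodColorings k L c (insert q I)) := by
  rcases Nat.eq_zero_or_pos β with rfl | hβ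
  · simp
  have hgood := sum_card_filter_squareFreeOn_update_le (k := k) (L := L) (c := c) hqI
  have hbad := sum_card_filter_not_squareFreeOn_update_le (L := L) hβ hgrow hN
  have hsplit : ∑ σ ∈ goodColorings k L c I,
        #((L q).filter fun a => SquareFreeOn k (insert q I) (update σ q a)) +
      ∑ σ ∈ goodColorings k L c I,
        #((L q).filter fun a => ¬SquareFreeOn k (insert q I) (update σ q a)) =
      #(goodColorings k L c I) * #(L q) := by
    rw [← sum_add_distrib, sum_congr rfl fun σ _ => card_filter_add_card_filter_not _,
      sum_const, smul_eq_mul]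
  have hC : (0 : ℝ) ≤ #(goodColorings k L c I) := Nat.cast_nonneg _
  have hgoodR : (_ : ℝ) ≤ _ := Nat.cast_le.2 hgood
  have hsplitR := congrArg (Nat.cast : ℕ → ℝ) hsplit
  push_cast at hgoodR hsplitR
  have : (β : ℝ) * #(goodColorings k L c I) ≤ #(goodColorings k L c (insert q I)) := by
    linarith [mul_le_mul_of_nonneg_right hL hC]
  exact_mod_cast this

variable {β : ℕ} {U : Finset ℕ}

theorem mul_card_goodColorings_le_card_insert
    (hL : ∀ q ∈ U, (β : ℝ) + k * ∑ h ∈ Icc 1 #U, 2 * h / (β : ℝ) ^ (h - 1) ≤ #(L q))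
    (hIU : I ⊆ U) {q : ℕ} (hqU : q ∈ U) (hqI : q ∉ I) :
    β * #(goodColorings k L c I) ≤ #(goodColorings k L c (insert q I)) := by
  induction I using Finset.strongInduction generalizing q with
  | H I ih =>
    refine mul_card_le_card_insert_of_forall_erase (hL q hqU) (fun J hJ p hp => ?_) hqI
      (card_le_card (insert_subset hqU hIU))
    have := ih (J.erase p) ((erase_ssubset hp).trans_subset hJ)
      (((erase_subset p J).trans hJ).trans hIU) (hIU (hJ hp)) (notMem_erase p J)
    rwa [insert_erase hp] at this

theorem pow_card_le_card_goodColorings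
    (hL : ∀ q ∈ U, (β : ℝ) + k * ∑ h ∈ Icc 1 #U, 2 * h / (β : ℝ) ^ (h - 1) ≤ #(L q))
    (hIU : I ⊆ U) : β ^ #I ≤ #(goodColorings k L c I) := by
  induction I using Finset.induction_on with
  | empty => simp [goodColorings_empty]
  | insert q I hqI ih =>
    have hIU' := (subset_insert q I).trans hIU
    rw [card_insert_of_notMem hqI, pow_succ']
    exact (Nat.mul_le_mul_left β (ih hIU')).trans
      (mul_card_goodColorings_le_card_insert hL hIU' (hIU (mem_insert_self q I)) hqI)

end Colorings

theorem sum_Icc_two_mul_div_pow_le {x : ℝ} (hx : 2 < x) (N : ℕ) :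
    ∑ h ∈ Icc 1 N, 2 * h / x ^ (h - 1) ≤ 2 * x / (x - 2) := by
  have hterm : ∀ h ∈ Icc 1 N, 2 * (h : ℝ) / x ^ (h - 1) ≤ 2 * (2 / x) ^ (h - 1) := by
    intro h hh
    have h2 : (h : ℝ) ≤ 2 ^ (h - 1) := by
      have := (mem_Icc.1 hh).1
      exact_mod_cast (show h ≤ 2 ^ (h - 1) by have := @Nat.lt_two_pow_self (h - 1); omega)
    rw [div_pow, ← mul_div_assoc]
    gcongr
  calc _ ≤ ∑ h ∈ Icc 1 N, 2 * (2 / x) ^ (h - 1) := sum_le_sum hterm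
    _ = 2 * ∑ j ∈ Ico 0 N, (2 / x) ^ j := by
      rw [mul_sum, ← Ico_add_one_right_eq_Icc, sum_Ico_eq_sum_range, sum_Ico_eq_sum_range]
      simp
    _ ≤ 2 * ((2 / x) ^ 0 / (1 - 2 / x)) := by
      gcongr
      exact geom_sum_Ico_le_of_lt_one (by positivity) ((div_lt_one (by linarith)).2 hx)
    _ = 2 * x / (x - 2) := by
      have : x - 2 ≠ 0 := by linarith
      field_simp

theorem three_mul_add_mul_sum_le {k w : ℝ} (hk : 0 ≤ k) (hw : 1 ≤ w) (hkw : k ≤ w ^ 2) (N : ℕ) :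
    3 * w + k * ∑ h ∈ Icc 1 N, 2 * h / (3 * w) ^ (h - 1) ≤ 2 * k + 10 * w := by
  have hsum := mul_le_mul_of_nonneg_left
    (sum_Icc_two_mul_div_pow_le (x := 3 * w) (by linarith) N) hk
  have : k * (2 * (3 * w) / (3 * w - 2)) ≤ 2 * k + 7 * w := by
    rw [mul_div_assoc', div_le_iff₀ (by linarith)]
    nlinarith
  linarith

theorem le_natCeil_sqrt_sq (k : ℕ) : k ≤ ⌈√(k : ℝ)⌉₊ ^ 2 := by
  exact_mod_cast (Real.sqrt_le_iff.1 (Nat.le_ceil √(k : ℝ))).2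

end SquareFreeColoring

open SquareFreeColoring

/-- Theorem 1: for all `n, k ≥ 1` and lists `L_1, ..., L_n` each of size at
least `2k + 10⌈√k⌉`, there is a sequence `S` with `s_i ∈ L_i` which is
nonrepetitive up to mod `k`. -/
theorem nonrepetitive_mod_k_from_lists {α : Type*} (n k : ℕ) (hn : 1 ≤ n) (hk : 1 ≤ k)
    (L : ℕ → Finset α)
    (hL : ∀ i, 1 ≤ i → i ≤ n → 2 * k + 10 * ⌈Real.sqrt k⌉₊ ≤ (L i).card) :
    ∃ s : ℕ → α, (∀ i, 1 ≤ i → i ≤ n → s i ∈ L i) ∧ NonrepetitiveUpToMod k s n := by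
  obtain ⟨c, -⟩ : (L 1).Nonempty := card_pos.1 (by have := hL 1 le_rfl hn; omega)
  set w := ⌈Real.sqrt k⌉₊
  have hw : 1 ≤ w := Nat.one_le_ceil_iff.2 (Real.sqrt_pos.2 (by exact_mod_cast hk))
  have hbudget : ∀ q ∈ Icc 1 n, ((3 * w : ℕ) : ℝ) +
      k * ∑ h ∈ Icc 1 #(Icc 1 n), 2 * h / ((3 * w : ℕ) : ℝ) ^ (h - 1) ≤ #(L q) := by
    intro q hq
    have hLq : ((2 * k + 10 * w : ℕ) : ℝ) ≤ #(L q) :=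
      Nat.cast_le.2 (hL q (mem_Icc.1 hq).1 (mem_Icc.1 hq).2)
    push_cast at hLq ⊢
    exact (three_mul_add_mul_sum_le (Nat.cast_nonneg k) (by exact_mod_cast hw)
      (by exact_mod_cast le_natCeil_sqrt_sq k) _).trans hLq
  obtain ⟨σ, hσ⟩ := card_pos.1 ((pow_pos (by omega) _).trans_le
    (pow_card_le_card_goodColorings (c := c) hbudget subset_rfl))
  obtain ⟨hσ, hfree⟩ := mem_goodColorings.1 hσ
  exact ⟨σ, fun i h₁ h₂ => (mem_colorings.1 hσ).1 i (mem_Icc.2 ⟨h₁, h₂⟩),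
    nonrepetitiveUpToMod_of_squareFreeOn hfree⟩
end

section
/- For every k ≥ 1, M(k) ≤ 2k + 10⌈√k⌉: there exist arbitrarily long sequences over an alphabet of size 2k + 10⌈√k⌉ whose arithmetic subsequences with common differences in {1, ..., k} are all nonrepetitive. -/
open Finset

lemma finite_setOf_forall_notMem_eq {ι α : Type*} [Finite α] (S : Finset ι) (z : α) :
    {f : ι → α | ∀ i ∉ S, f i = z}.Finite := by
  refine Set.Finite.of_finite_image (f := fun f (i : S) => f i) (Set.toFinite _) ?_
  intro f hf g hg hfg
  funext i
  by_cases hi : i ∈ S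
  · exact congrFun hfg ⟨i, hi⟩
  · rw [hf i hi, hg i hi]

/-- Forbidden patterns `r ∈ patterns` on colorings `ι → α`: an occurrence of `r` is determined
by its values outside `half u r`, for any position `u` of its support. -/
structure PatternFamily (ι α ρ : Type*) where
  patterns : Finset ρ
  support : ρ → Finset ι
  Occurs : ρ → (ι → α) → Prop
  half : ι → ρ → Finset ι
  support_nonempty {r : ρ} : r ∈ patterns → (support r).Nonempty
  half_subset_support (u : ι) (r : ρ) : half u r ⊆ support r
  mem_half {u : ι} {r : ρ} : u ∈ support r → u ∈ half u r
  occurs_congr {r : ρ} {f g : ι → α} : (∀ p ∈ support r, f p = g p) → Occurs r f → Occurs r g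
  eq_of_occurs {u : ι} {r : ρ} {f g : ι → α} : r ∈ patterns → u ∈ support r → Occurs r f →
    Occurs r g → (∀ p ∉ half u r, f p = g p) → f = g

namespace PatternFamily

variable {ι α ρ : Type*} (P : PatternFamily ι α ρ) (z : α)

def Avoids (T : Finset ι) (f : ι → α) : Prop :=
  ∀ r ∈ P.patterns, P.support r ⊆ T → ¬ P.Occurs r f

def colorings (S T : Finset ι) : Set (ι → α) :=
  {f | (∀ i ∉ S, f i = z) ∧ P.Avoids T f}

noncomputable def count (S : Finset ι) : ℕ :=
  (P.colorings z S S).ncard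

variable {P}

lemma Avoids.anti {T T' : Finset ι} {f : ι → α} (hT : T' ⊆ T) (hf : P.Avoids T f) :
    P.Avoids T' f :=
  fun r hr hrT => hf r hr (hrT.trans hT)

lemma Avoids.congr {T : Finset ι} {f g : ι → α} (hfg : ∀ p ∈ T, f p = g p)
    (hf : P.Avoids T f) : P.Avoids T g :=
  fun r hr hrT hg => hf r hr hrT (P.occurs_congr (fun p hp => (hfg p (hrT hp)).symm) hg)

variable (P)

lemma finite_colorings [Finite α] (S T : Finset ι) : (P.colorings z S T).Finite :=
  (finite_setOf_forall_notMem_eq S z).subset fun _ hf => hf.1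

lemma count_empty : P.count z ∅ = 1 := by
  have : P.colorings z ∅ ∅ = {fun _ => z} := by
    ext f
    refine ⟨fun hf => funext fun i => hf.1 i (notMem_empty i), ?_⟩
    rintro rfl
    refine ⟨fun _ _ => rfl, fun r hr hrS _ => ?_⟩
    obtain ⟨p, hp⟩ := P.support_nonempty hr
    exact notMem_empty p (hrS hp)
  rw [count, this, Set.ncard_singleton]

variable [DecidableEq ι]

lemma card_mul_count_erase_le [Fintype α] {S : Finset ι} {u : ι} (hu : u ∈ S) :
    Fintype.card α * P.count z (S.erase u) ≤ (P.colorings z S (S.erase u)).ncard := by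
  rw [count, mul_comm, ← Nat.card_eq_fintype_card, ← Set.ncard_univ, ← Set.ncard_prod]
  refine Set.ncard_le_ncard_of_injOn (fun p => Function.update p.1 u p.2) ?_ ?_
    (P.finite_colorings z _ _)
  · rintro ⟨g, a⟩ ⟨⟨hgz, hg⟩, -⟩
    refine ⟨fun i hi => ?_, hg.congr fun p hp => ?_⟩
    · rw [Function.update_of_ne (ne_of_mem_of_not_mem hu hi).symm]
      exact hgz i fun hi' => hi (mem_of_mem_erase hi')
    · rw [Function.update_of_ne (ne_of_mem_erase hp)]
  · rintro ⟨g, a⟩ ⟨⟨hgz, -⟩, -⟩ ⟨g', a'⟩ ⟨⟨hgz', -⟩, -⟩ hgg'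
    have ha : a = a' := by simpa using congrFun hgg' u
    refine Prod.ext (funext fun i => ?_) ha
    by_cases hi : i = u
    · rw [hi, hgz u (notMem_erase u S), hgz' u (notMem_erase u S)]
    · simpa [Function.update_of_ne hi] using congrFun hgg' i

lemma colorings_erase_subset {S : Finset ι} {u : ι} :
    P.colorings z S (S.erase u) ⊆ P.colorings z S S ∪
      ⋃ r ∈ {r ∈ P.patterns | u ∈ P.support r ∧ P.support r ⊆ S},
        {f ∈ P.colorings z S (S.erase u) | P.Occurs r f} := by
  intro f hf
  by_contra hbad
  simp only [Set.mem_union, Set.mem_iUnion, not_or, not_exists] at hbad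
  refine hbad.1 ⟨hf.1, fun r hr hrS hocc => ?_⟩
  by_cases hur : u ∈ P.support r
  · exact hbad.2 r (mem_filter.2 ⟨hr, hur, hrS⟩) ⟨hf, hocc⟩
  · exact hf.2 r hr (fun p hp => mem_erase.2 ⟨ne_of_mem_of_not_mem hp hur, hrS hp⟩) hocc

/-- The masking map `f ↦ (z on the half, f elsewhere)` is injective on the bad extensions
containing `r`, since an occurrence of `r` restores the half. -/
lemma ncard_occurs_le_count_sdiff_half [Finite α] {S : Finset ι} {u : ι} {r : ρ}
    (hr : r ∈ P.patterns) (hur : u ∈ P.support r) :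
    {f ∈ P.colorings z S (S.erase u) | P.Occurs r f}.ncard ≤ P.count z (S \ P.half u r) := by
  let mask : (ι → α) → ι → α := fun f p => if p ∈ P.half u r then z else f p
  refine Set.ncard_le_ncard_of_injOn mask ?_ ?_ (P.finite_colorings z _ _)
  · rintro f ⟨⟨hfz, hf⟩, -⟩
    have hsub : S \ P.half u r ⊆ S.erase u := fun p hp =>
      mem_erase.2 ⟨by rintro rfl; exact (mem_sdiff.1 hp).2 (P.mem_half hur), (mem_sdiff.1 hp).1⟩
    refine ⟨fun p hp => ?_, (hf.anti hsub).congr fun p hp => ?_⟩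
    · by_cases hph : p ∈ P.half u r
      · simp [mask, hph]
      · simp only [mask, if_neg hph]
        exact hfz p fun hpS => hp (mem_sdiff.2 ⟨hpS, hph⟩)
    · simp [mask, (mem_sdiff.1 hp).2]
  · rintro f ⟨-, hf⟩ g ⟨-, hg⟩ hfg
    refine P.eq_of_occurs hr hur hf hg fun p hp => ?_
    simpa [mask, hp] using congrFun hfg p

theorem card_mul_count_erase_le_add_sum [Fintype α] {S : Finset ι} {u : ι} (hu : u ∈ S) :
    Fintype.card α * P.count z (S.erase u) ≤ P.count z S +
      ∑ r ∈ {r ∈ P.patterns | u ∈ P.support r ∧ P.support r ⊆ S},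
        P.count z (S \ P.half u r) := by
  set R := {r ∈ P.patterns | u ∈ P.support r ∧ P.support r ⊆ S}
  have hfin : (P.colorings z S S ∪
      ⋃ r ∈ R, {f ∈ P.colorings z S (S.erase u) | P.Occurs r f}).Finite :=
    (P.finite_colorings z S S).union <| R.finite_toSet.biUnion fun _ _ =>
      (P.finite_colorings z S _).subset (Set.sep_subset _ _)
  calc Fintype.card α * P.count z (S.erase u)
      ≤ (P.colorings z S (S.erase u)).ncard := P.card_mul_count_erase_le z hu
    _ ≤ P.count z S + ∑ r ∈ R, {f ∈ P.colorings z S (S.erase u) | P.Occurs r f}.ncard :=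
      (Set.ncard_le_ncard (P.colorings_erase_subset z) hfin).trans <|
        (Set.ncard_union_le _ _).trans (Nat.add_le_add_left (set_ncard_biUnion_le _ _) _)
    _ ≤ _ := Nat.add_le_add_left (sum_le_sum fun r hr =>
      P.ncard_occurs_le_count_sdiff_half z (mem_filter.1 hr).1 (mem_filter.1 hr).2.1) _

lemma pow_card_mul_count_sdiff_le {β : ℝ} (hβ : 0 ≤ β) {S U : Finset ι} (hUS : U ⊆ S)
    (h : ∀ V ⊆ S, ∀ u ∈ V, β * P.count z (V.erase u) ≤ P.count z V) :
    β ^ #U * P.count z (S \ U) ≤ P.count z S := by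
  induction U using Finset.induction_on generalizing S with
  | empty => simp
  | insert x U hx ih =>
    have hxS := hUS (mem_insert_self x U)
    have hU : U ⊆ S.erase x := fun y hy =>
      mem_erase.2 ⟨ne_of_mem_of_not_mem hy hx, hUS (mem_insert_of_mem hy)⟩
    have hrest := ih hU fun V hV => h V (hV.trans (erase_subset x S))
    calc β ^ #(insert x U) * P.count z (S \ insert x U)
        = β * (β ^ #U * P.count z (S.erase x \ U)) := by
          rw [card_insert_of_notMem hx, sdiff_insert, erase_sdiff_comm, pow_succ]; ring
      _ ≤ β * P.count z (S.erase x) := by gcongr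
      _ ≤ P.count z S := h S subset_rfl x hxS

lemma count_sdiff_half_le {β : ℝ} (hβ : 0 < β) {S : Finset ι} {u : ι} {r : ρ}
    (hur : u ∈ P.support r) (hrS : P.support r ⊆ S)
    (h : ∀ V ⊆ S.erase u, ∀ v ∈ V, β * P.count z (V.erase v) ≤ P.count z V) :
    (P.count z (S \ P.half u r) : ℝ) ≤ β⁻¹ ^ (#(P.half u r) - 1) * P.count z (S.erase u) := by
  have huh := P.mem_half hur
  have key := P.pow_card_mul_count_sdiff_le z hβ.le
    (erase_subset_erase u ((P.half_subset_support u r).trans hrS)) h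
  rw [card_erase_of_mem huh, ← erase_sdiff_distrib,
    erase_eq_of_notMem fun h => (mem_sdiff.1 h).2 huh] at key
  rwa [inv_pow, le_inv_mul_iff₀ (by positivity)]

def WeightCondition [Fintype α] (β : ℝ) : Prop :=
  ∀ u, β + ∑ r ∈ {r ∈ P.patterns | u ∈ P.support r}, β⁻¹ ^ (#(P.half u r) - 1) ≤ Fintype.card α

variable [Fintype α] {β : ℝ}

theorem mul_count_erase_le_count (hβ : 0 < β) (hweight : P.WeightCondition β) (S : Finset ι) :
    ∀ u ∈ S, β * P.count z (S.erase u) ≤ P.count z S := by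
  induction S using Finset.strongInduction with
  | H S ih =>
    intro u hu
    have hcount : (Fintype.card α * P.count z (S.erase u) : ℝ) ≤ P.count z S +
        ∑ r ∈ {r ∈ P.patterns | u ∈ P.support r ∧ P.support r ⊆ S},
          (P.count z (S \ P.half u r) : ℝ) := by
      exact_mod_cast P.card_mul_count_erase_le_add_sum z hu
    have hsum : ∑ r ∈ {r ∈ P.patterns | u ∈ P.support r ∧ P.support r ⊆ S},
        (P.count z (S \ P.half u r) : ℝ) ≤ (∑ r ∈ {r ∈ P.patterns | u ∈ P.support r},
          β⁻¹ ^ (#(P.half u r) - 1)) * P.count z (S.erase u) := by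
      rw [sum_mul]
      refine (sum_le_sum fun r hr => ?_).trans
        (sum_le_sum_of_subset_of_nonneg ?_ fun _ _ _ => by positivity)
      · obtain ⟨-, hur, hrS⟩ := mem_filter.1 hr
        exact P.count_sdiff_half_le z hβ hur hrS fun V hV =>
          ih V (hV.trans_ssubset (erase_ssubset hu))
      · exact fun r hr => mem_filter.2 ⟨(mem_filter.1 hr).1, (mem_filter.1 hr).2.1⟩
    nlinarith [mul_le_mul_of_nonneg_right (hweight u) (Nat.cast_nonneg (P.count z (S.erase u)))]

theorem pow_card_le_count (hβ : 0 < β) (hweight : P.WeightCondition β) (S : Finset ι) :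
    β ^ #S ≤ P.count z S := by
  have := P.pow_card_mul_count_sdiff_le z hβ.le (subset_refl S)
    fun V _ => P.mul_count_erase_le_count z hβ hweight V
  rwa [Finset.sdiff_self, count_empty, Nat.cast_one, mul_one] at this

theorem colorings_nonempty (hβ : 0 < β) (hweight : P.WeightCondition β) (S : Finset ι) :
    (P.colorings z S S).Nonempty := by
  refine Set.nonempty_of_ncard_ne_zero fun h0 => ?_
  have := P.pow_card_le_count z hβ hweight S
  rw [count, h0, Nat.cast_zero] at this
  exact (pow_pos hβ _).not_ge this

end PatternFamily

section Progressions

variable {α : Type*}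

def apBlock (i d : ℕ) (s : Finset ℕ) : Finset ℕ :=
  s.image fun t => i + t * d

lemma add_mul_mem_apBlock_iff {i d t : ℕ} {s : Finset ℕ} (hd : 0 < d) :
    i + t * d ∈ apBlock i d s ↔ t ∈ s :=
  Function.Injective.mem_finset_image fun _ _ h =>
    Nat.eq_of_mul_eq_mul_right hd (Nat.add_left_cancel h)

lemma card_apBlock {i d : ℕ} (s : Finset ℕ) (hd : 0 < d) : #(apBlock i d s) = #s :=
  card_image_of_injective _ fun _ _ h =>
    Nat.eq_of_mul_eq_mul_right hd (Nat.add_left_cancel h)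

lemma card_filter_mem_apBlock_le (u d : ℕ) (s I : Finset ℕ) :
    #{i ∈ I | u ∈ apBlock i d s} ≤ #s := by
  calc #{i ∈ I | u ∈ apBlock i d s}
      ≤ #(s.image fun t => u - t * d) := card_le_card fun i hi => by
        obtain ⟨t, ht, hti⟩ := mem_image.1 (mem_filter.1 hi).2
        exact mem_image.2 ⟨t, ht, by omega⟩
    _ ≤ #s := card_image_le

def IsRepetition (f : ℕ → α) (d h i : ℕ) : Prop :=
  ∀ t < h, f (i + t * d) = f (i + (h + t) * d)

def apHalf (u d h i : ℕ) : Finset ℕ :=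
  if u ∈ apBlock i d (range h) then apBlock i d (range h) else apBlock i d (Ico h (2 * h))

lemma apHalf_subset (u d h i : ℕ) : apHalf u d h i ⊆ apBlock i d (range (2 * h)) := by
  unfold apHalf
  split_ifs
  · exact image_subset_image (range_subset_range.2 (by omega))
  · exact image_subset_image fun t ht => mem_range.2 (mem_Ico.1 ht).2

lemma mem_apHalf {u d h i : ℕ} (hu : u ∈ apBlock i d (range (2 * h))) : u ∈ apHalf u d h i := by
  unfold apHalf
  split_ifs with hfirst
  · exact hfirst
  · rw [apBlock, ← Nat.Ico_zero_eq_range, ← Ico_union_Ico_eq_Ico (Nat.zero_le h) (by omega),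
      image_union, Nat.Ico_zero_eq_range] at hu
    exact (mem_union.1 hu).resolve_left hfirst

lemma card_apHalf {u d h i : ℕ} (hd : 0 < d) : #(apHalf u d h i) = h := by
  unfold apHalf
  split_ifs
  · rw [card_apBlock _ hd, card_range]
  · rw [card_apBlock _ hd, Nat.card_Ico]
    omega

lemma IsRepetition.congr {f g : ℕ → α} {d h i : ℕ}
    (hfg : ∀ p ∈ apBlock i d (range (2 * h)), f p = g p) (hf : IsRepetition f d h i) :
    IsRepetition g d h i := by
  intro t ht
  rw [← hfg _ (mem_image_of_mem _ (mem_range.2 (by omega))),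
    ← hfg _ (mem_image_of_mem (fun t => i + t * d) (mem_range.2 (by omega : h + t < 2 * h))),
    hf t ht]

/-- Each position of a half is matched, by the repetition, with a position outside that half. -/
lemma IsRepetition.eq_of_forall_notMem_apHalf {f g : ℕ → α} {u d h i : ℕ} (hd : 0 < d)
    (hf : IsRepetition f d h i) (hg : IsRepetition g d h i)
    (hfg : ∀ p ∉ apHalf u d h i, f p = g p) : f = g := by
  funext p
  by_cases hp : p ∈ apHalf u d h i
  swap
  · exact hfg p hp
  unfold apHalf at hp hfg
  split_ifs at hp hfg
  · obtain ⟨t, ht, rfl⟩ := mem_image.1 hp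
    have ht : t < h := mem_range.1 ht
    have hout : i + (h + t) * d ∉ apBlock i d (range h) := by
      rw [add_mul_mem_apBlock_iff hd, mem_range]
      omega
    rw [hf t ht, hg t ht, hfg _ hout]
  · obtain ⟨t, ht, rfl⟩ := mem_image.1 hp
    obtain ⟨s, rfl⟩ : ∃ s, t = h + s := ⟨t - h, by rw [mem_Ico] at ht; omega⟩
    have hs : s < h := by rw [mem_Ico] at ht; omega
    have hout : i + s * d ∉ apBlock i d (Ico h (2 * h)) := by
      rw [add_mul_mem_apBlock_iff hd, mem_Ico]
      omega
    rw [← hf s hs, ← hg s hs, hfg _ hout]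

/-- The pattern `(d, h, i)` is a repetition of half-length `h` along `i, i + d, i + 2d, …`. -/
def apPatterns (α : Type*) (k n : ℕ) : PatternFamily ℕ α (ℕ × ℕ × ℕ) where
  patterns := Icc 1 k ×ˢ Icc 1 n ×ˢ Icc 1 n
  support x := apBlock x.2.2 x.1 (range (2 * x.2.1))
  Occurs x f := IsRepetition f x.1 x.2.1 x.2.2
  half u x := apHalf u x.1 x.2.1 x.2.2
  support_nonempty hx := by
    have hh := (mem_Icc.1 (mem_product.1 (mem_product.1 hx).2).1).1
    exact ⟨_, mem_image_of_mem _ (mem_range.2 (by omega : 0 < 2 * _))⟩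
  half_subset_support u x := apHalf_subset u _ _ _
  mem_half := mem_apHalf
  occurs_congr := IsRepetition.congr
  eq_of_occurs hx _ hf hg hfg :=
    hf.eq_of_forall_notMem_apHalf (mem_Icc.1 (mem_product.1 hx).1).1 hg hfg

end Progressions

lemma sum_Icc_mul_pow_sub_one_le {q : ℝ} (hq0 : 0 ≤ q) (hq1 : q < 1) (n : ℕ) :
    ∑ h ∈ Icc 1 n, (h : ℝ) * q ^ (h - 1) ≤ 1 / (1 - q) ^ 2 := by
  have hs : HasSum (fun h : ℕ => (h : ℝ) * q ^ (h - 1)) (1 / (1 - q) ^ 2) := by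
    refine (hasSum_nat_add_iff' 1).1 ?_
    have h := hasSum_choose_mul_geometric_of_norm_lt_one (𝕜 := ℝ) 1
      (by rwa [Real.norm_of_nonneg hq0])
    simp only [Nat.choose_one_right] at h
    simpa using h
  exact sum_le_hasSum _ (fun h _ => by positivity) hs

lemma sum_pow_card_apHalf_sub_one_le {q : ℝ} (hq0 : 0 ≤ q) (hq1 : q < 1) (k n u : ℕ) :
    ∑ x ∈ {x ∈ Icc 1 k ×ˢ Icc 1 n ×ˢ Icc 1 n | u ∈ apBlock x.2.2 x.1 (range (2 * x.2.1))},
      q ^ (#(apHalf u x.1 x.2.1 x.2.2) - 1) ≤ 2 * k / (1 - q) ^ 2 := by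
  calc _ = ∑ d ∈ Icc 1 k, ∑ h ∈ Icc 1 n,
          (#{i ∈ Icc 1 n | u ∈ apBlock i d (range (2 * h))} : ℝ) * q ^ (h - 1) := by
        rw [sum_filter, sum_product]
        refine sum_congr rfl fun d hd => ?_
        rw [sum_product]
        refine sum_congr rfl fun h _ => ?_
        rw [← sum_filter]
        dsimp only
        rw [sum_congr rfl fun i _ => by rw [card_apHalf (mem_Icc.1 hd).1], sum_const, nsmul_eq_mul]
    _ ≤ ∑ d ∈ Icc 1 k, ∑ h ∈ Icc 1 n, (2 * h : ℝ) * q ^ (h - 1) := by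
        gcongr with d _ h _
        exact_mod_cast (card_filter_mem_apBlock_le u d _ _).trans (card_range _).le
    _ = ∑ d ∈ Icc 1 k, 2 * ∑ h ∈ Icc 1 n, (h : ℝ) * q ^ (h - 1) := by
        simp only [mul_sum, mul_assoc]
    _ ≤ ∑ d ∈ Icc 1 k, 2 * (1 / (1 - q) ^ 2) := by
        gcongr
        exact sum_Icc_mul_pow_sub_one_le hq0 hq1 n
    _ = 2 * k / (1 - q) ^ 2 := by
        rw [sum_const, Nat.card_Icc, Nat.add_sub_cancel, nsmul_eq_mul]
        ring

lemma weightCondition_apPatterns {α : Type*} [Fintype α] (k n : ℕ) {β : ℝ} (hβ : 1 < β)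
    (hα : β + 2 * k * (β / (β - 1)) ^ 2 ≤ Fintype.card α) :
    (apPatterns α k n).WeightCondition β := fun u => by
  have hq := sum_pow_card_apHalf_sub_one_le (inv_nonneg.2 (by linarith : 0 ≤ β))
    (inv_lt_one_of_one_lt₀ hβ) k n u
  have hβ' : 2 * k / (1 - β⁻¹) ^ 2 = 2 * k * (β / (β - 1)) ^ 2 := by
    have : β - 1 ≠ 0 := by linarith
    field_simp
  rw [hβ'] at hq
  exact (add_le_add le_rfl hq).trans hα

theorem exists_nonrepetitiveUpToMod {α : Type*} [Fintype α] (k n : ℕ) {β : ℝ} (hβ : 1 < β)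
    (hα : β + 2 * k * (β / (β - 1)) ^ 2 ≤ Fintype.card α) :
    ∃ s : ℕ → α, NonrepetitiveUpToMod k s n := by
  have : Nonempty α := Fintype.card_pos_iff.1 <| by
    have : (0 : ℝ) < β - 1 := by linarith
    have : (0 : ℝ) ≤ 2 * k * (β / (β - 1)) ^ 2 := by positivity
    exact_mod_cast (by linarith : (0 : ℝ) < Fintype.card α)
  obtain ⟨s, -, hs⟩ := (apPatterns α k n).colorings_nonempty (Classical.arbitrary α)
    (by linarith) (weightCondition_apPatterns k n hβ hα) (Icc 1 n)
  refine ⟨s, fun d i h hd hdk hi hh hlast hrep => hs (d, h, i) ?_ ?_ hrep⟩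
  · have : h ≤ (2 * h - 1) * d := le_trans (by omega) (Nat.le_mul_of_pos_right _ hd)
    simp only [apPatterns, mem_product, mem_Icc]
    omega
  · intro p hp
    obtain ⟨t, ht, rfl⟩ := mem_image.1 hp
    have ht : t < 2 * h := mem_range.1 ht
    have : t * d ≤ (2 * h - 1) * d := Nat.mul_le_mul_right d (by omega)
    show i + t * d ∈ Icc 1 n
    rw [mem_Icc]
    omega

lemma two_mul_add_two_mul_div_sq_le {k r : ℝ} (hr : 1 ≤ r) (hkr : k ≤ r ^ 2) :
    2 * r + 2 * k * (2 * r / (2 * r - 1)) ^ 2 ≤ 2 * k + 10 * r := by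
  have h2r : 0 < 2 * r - 1 := by linarith
  have : 2 * k * (2 * r / (2 * r - 1)) ^ 2 ≤ 2 * k + 8 * r := by
    rw [div_pow, ← mul_div_assoc, div_le_iff₀ (by positivity)]
    nlinarith [mul_nonneg (sub_nonneg.2 hkr) (by linarith : (0 : ℝ) ≤ 8 * r - 2),
      mul_pos (by linarith : (0 : ℝ) < r) h2r]
  linarith

/-- `M(k) ≤ 2k + 10⌈√k⌉`: for every `k ≥ 1` and every `n` there is a sequence
of length `n` over an alphabet of size `2k + 10⌈√k⌉` which is nonrepetitive
up to mod `k`. -/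
theorem M_le_two_k_add_ten_sqrt_k (k : ℕ) (hk : 1 ≤ k) (n : ℕ) :
    ∃ s : ℕ → Fin (2 * k + 10 * ⌈Real.sqrt k⌉₊), NonrepetitiveUpToMod k s n := by
  set r := ⌈Real.sqrt k⌉₊
  have hr : (1 : ℝ) ≤ r := by
    exact_mod_cast Nat.one_le_ceil_iff.2 (Real.sqrt_pos.2 (by exact_mod_cast hk))
  have hkr : (k : ℝ) ≤ r ^ 2 := (Real.sqrt_le_left (by positivity)).1 (Nat.le_ceil _)
  refine exists_nonrepetitiveUpToMod k n (β := 2 * r) (by linarith) ?_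
  rw [Fintype.card_fin]
  push_cast
  exact two_mul_add_two_mul_div_sq_le hr hkr
end
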